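/- arXiv:1104.3065 — 8 statements merged into one kernel-verified Lean document; each statement's English description precedes it below -/
import Mathlib

section
/- Let G = N ⋊ H be a semidirect product (N normal, H a complement). Then H is malnormal in G if and only if nh ≠ hn for all n ∈ N, n ≠ e, and h ∈ H, h ≠ e. -/
def IsMalnormal {G : Type*} [Group G] (H : Subgroup G) : Prop :=
  ∀ g : G, g ∉ H → ∀ x : G, x ∈ H → g⁻¹ * x * g ∈ H → x = 1

theorem malnormal_iff_no_commuting {G : Type*} [Group G] (N H : Subgroup G)
    [N.Normal] (hdisj : N ⊓ H = ⊥)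
    (hsplit : ∀ g : G, ∃ n ∈ N, ∃ h ∈ H, g = n * h) :
    IsMalnormal H ↔
      ∀ n ∈ N, n ≠ 1 → ∀ h ∈ H, h ≠ 1 → n * h ≠ h * n := by
  have hdisj' : ∀ x : G, x ∈ N → x ∈ H → x = 1 := by
    intro x hxN hxH
    have : x ∈ N ⊓ H := ⟨hxN, hxH⟩
    rw [hdisj] at this
    exact this
  constructor
  · intro hmal n hn hn1 h hh hh1 hcomm
    have hnH : n ∉ H := fun hnH => hn1 (hdisj' n hn hnH)
    have : n⁻¹ * h * n ∈ H := by
      have : n⁻¹ * h * n = h := by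
        have := hcomm
        group
        rw [mul_assoc] at *
        rw [← hcomm]
        group
      rw [this]; exact hh
    exact hh1 (hmal n hnH h hh this)
  · intro hnc g hg x hx hconj
    by_contra hx1
    obtain ⟨n, hn, h0, hh0, rfl⟩ := hsplit g
    have hn1 : n ≠ 1 := by
      rintro rfl
      simp at hg
      exact hg hh0
    have hy : n⁻¹ * x * n ∈ H := by
      have : (n * h0)⁻¹ * x * (n * h0) = h0⁻¹ * (n⁻¹ * x * n) * h0 := by group
      rw [this] at hconj
      have := H.mul_mem (H.mul_mem hh0 hconj) (H.inv_mem hh0)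
      simpa [mul_assoc] using this
    have hyN : (n⁻¹ * x * n) * x⁻¹ ∈ N := by
      have h1 : x * n * x⁻¹ ∈ N := Subgroup.Normal.conj_mem ‹N.Normal› n hn x
      have : (n⁻¹ * x * n) * x⁻¹ = n⁻¹ * (x * n * x⁻¹) := by group
      rw [this]
      exact N.mul_mem (N.inv_mem hn) h1
    have hyH : (n⁻¹ * x * n) * x⁻¹ ∈ H := H.mul_mem hy (H.inv_mem hx)
    have heq : (n⁻¹ * x * n) * x⁻¹ = 1 := hdisj' _ hyN hyH
    have : n * x = x * n := by
      have := mul_eq_one_iff_eq_inv.mp heq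
      have h2 : n⁻¹ * x * n = x := by simpa using this
      calc n * x = n * (n⁻¹ * x * n) := by rw [h2]
        _ = x * n := by group
    exact hnc n hn hn1 x hx hx1 this
end

section
/- Let G = N ⋊ H be a semidirect product. Then H is malnormal in G if and only if C_G(h) = C_H(h) for every h ∈ H with h ≠ e. -/
theorem malnormal_iff_centralizers {G : Type*} [Group G] (N H : Subgroup G)
    [N.Normal] (hdisj : N ⊓ H = ⊥)
    (hsplit : ∀ g : G, ∃ n ∈ N, ∃ h ∈ H, g = n * h) :
    IsMalnormal H ↔
      ∀ h : G, h ∈ H → h ≠ 1 →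
        Subgroup.centralizer {h} = Subgroup.centralizer {h} ⊓ H := by
  constructor
  · intro hm h hH hne
    refine le_antisymm ?_ inf_le_left
    intro g hg
    refine ⟨hg, ?_⟩
    by_contra hgH
    have hcomm : h * g = g * h := hg h rfl
    have : g⁻¹ * h * g ∈ H := by
      have : g⁻¹ * h * g = h := by
        rw [mul_assoc, hcomm, ← mul_assoc, inv_mul_cancel, one_mul]
      rw [this]; exact hH
    exact hne (hm g hgH h hH this)
  · intro hc g hgH x hxH hconj
    by_contra hx
    obtain ⟨n, hn, k, hk, rfl⟩ := hsplit g
    have hn1 : n ≠ 1 := by rintro rfl; exact hgH (by simpa using hk)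
    have h1 : n⁻¹ * x * n ∈ H := by
      have h2 : k * ((n * k)⁻¹ * x * (n * k)) * k⁻¹ ∈ H :=
        H.mul_mem (H.mul_mem hk hconj) (H.inv_mem hk)
      have h3 : k * ((n * k)⁻¹ * x * (n * k)) * k⁻¹ = n⁻¹ * x * n := by group
      rwa [h3] at h2
    have hmN : n⁻¹ * x * n * x⁻¹ ∈ N := by
      have : n⁻¹ * (x * n * x⁻¹) ∈ N :=
        N.mul_mem (N.inv_mem hn) (Subgroup.Normal.conj_mem ‹N.Normal› n hn x)
      simpa [mul_assoc] using this
    have hmH : n⁻¹ * x * n * x⁻¹ ∈ H := H.mul_mem h1 (H.inv_mem hxH)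
    have heq : n⁻¹ * x * n * x⁻¹ = 1 := by
      have : n⁻¹ * x * n * x⁻¹ ∈ N ⊓ H := ⟨hmN, hmH⟩
      rwa [hdisj] at this
    have hcomm : x * n = n * x := by
      have := mul_eq_one_iff_eq_inv.mp heq
      rw [inv_inv] at this
      calc x * n = n * (n⁻¹ * x * n) := by group
        _ = n * x := by rw [this]
    have hcen : n ∈ Subgroup.centralizer {x} := by
      intro y hy
      simp only [Set.mem_singleton_iff] at hy
      subst hy; exact hcomm
    rw [hc x hxH hx] at hcen
    have : n ∈ N ⊓ H := ⟨hn, hcen.2⟩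
    rw [hdisj] at this
    exact hn1 this
end

section
/- Malnormality is transitive: if H is malnormal in G and K is malnormal in H, then K is malnormal in G. -/
theorem malnormal_trans {G : Type*} [Group G] (H K : Subgroup G)
    (hKH : K ≤ H) (hH : IsMalnormal H)
    (hK : ∀ h : G, h ∈ H → h ∉ K → ∀ x : G, x ∈ K → h⁻¹ * x * h ∈ K → x = 1) :
    IsMalnormal K := by
  intro g hg x hx hconj
  by_cases hgH : g ∈ H
  · exact hK g hgH hg x hx hconj
  · exact hH g hgH x (hKH hx) (hKH hconj)
end

section
/- In a free product G = H ∗ H' of two groups, the factor H is malnormal in G. -/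
namespace Monoid.CoprodI

variable {ι : Type*} {G : ι → Type*} [∀ i, Group (G i)]

theorem NeWord.length_toList_inv {i j : ι} (w : NeWord G i j) :
    w.inv.toList.length = w.toList.length := by
  induction w with
  | singleton => rfl
  | append _ _ _ ih₁ ih₂ => simp [NeWord.inv, ih₁, ih₂, Nat.add_comm]

theorem NeWord.fstIdx_toWord {i j : ι} (w : NeWord G i j) : w.toWord.fstIdx = some i := by
  simp [Word.fstIdx, NeWord.toWord]

theorem ne_one_of_of_eq_conj {i : ι} {a b : G i} (ha : a ≠ 1) {g : CoprodI G}
    (h : of b = g⁻¹ * of a * g) : b ≠ 1 := by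
  rintro rfl
  rw [map_one, eq_comm, mul_assoc, inv_mul_eq_one, right_eq_mul,
    map_eq_one_iff _ (of_injective i)] at h
  exact ha h

section Word

variable [DecidableEq ι] [∀ i, DecidableEq (G i)]

theorem Word.equiv_prod (w : Word G) : Word.equiv w.prod = w :=
  Word.equiv.apply_symm_apply w

theorem Word.equiv_eq_empty_iff {g : CoprodI G} : Word.equiv g = Word.empty ↔ g = 1 :=
  Word.equiv.eq_symm_apply.symm

theorem Word.length_tail_equivPair_lt {i : ι} {w : Word G} (h : w.fstIdx = some i) :
    (Word.equivPair i w).tail.toList.length < w.toList.length := by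
  set p := Word.equivPair i w
  have hw : Word.rcons p = w := (Word.equivPair i).symm_apply_apply w
  by_cases hp : p.head = 1
  · rw [Word.rcons, dif_pos hp] at hw
    exact absurd (hw ▸ h) p.fstIdx_ne
  · rw [← hw, Word.rcons, dif_neg hp]
    simp

theorem NeWord.equiv_prod {i j : ι} (w : NeWord G i j) : Word.equiv w.prod = w.toWord :=
  Word.equiv_prod w.toWord

theorem NeWord.exists_prod_eq {g : CoprodI G} (hg : g ≠ 1) :
    ∃ (i j : ι) (w : NeWord G i j), w.prod = g := by
  obtain ⟨i, j, w, hw⟩ := NeWord.of_word _ (mt Word.equiv_eq_empty_iff.mp hg)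
  exact ⟨i, j, w, by rw [NeWord.prod, hw]; exact Word.equiv.symm_apply_apply g⟩

theorem exists_eq_of_mul_of_length_lt {i : ι} {g : CoprodI G}
    (h : (Word.equiv g).fstIdx = some i) :
    ∃ (c : G i) (g₁ : CoprodI G), g = of c * g₁ ∧
      (Word.equiv g₁).toList.length < (Word.equiv g).toList.length := by
  set p := Word.equivPair i (Word.equiv g)
  refine ⟨p.head, p.tail.prod, ?_, by rw [Word.equiv_prod]; exact Word.length_tail_equivPair_lt h⟩
  rw [← Word.prod_rcons, ← Word.equivPair_symm, Equiv.symm_apply_apply]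
  exact (Word.equiv.symm_apply_apply g).symm

theorem length_equiv_inv (g : CoprodI G) :
    (Word.equiv g⁻¹).toList.length = (Word.equiv g).toList.length := by
  by_cases hg : g = 1
  · rw [hg, inv_one]
  obtain ⟨_, _, w, rfl⟩ := NeWord.exists_prod_eq hg
  rw [← NeWord.inv_prod, NeWord.equiv_prod, NeWord.equiv_prod]
  exact w.length_toList_inv

theorem conj_notMem_range_of_fstIdx_ne {i : ι} {g : CoprodI G} (hg : g ≠ 1)
    (hfst : (Word.equiv g).fstIdx ≠ some i) (hlast : (Word.equiv g⁻¹).fstIdx ≠ some i)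
    {a : G i} (ha : a ≠ 1) : g⁻¹ * of a * g ∉ (of : G i →* CoprodI G).range := by
  rintro ⟨b, hb⟩
  obtain ⟨j, k, w, rfl⟩ := NeWord.exists_prod_eq hg
  have hj : j ≠ i := by
    rintro rfl
    rw [NeWord.equiv_prod, NeWord.fstIdx_toWord] at hfst
    exact hfst rfl
  have hk : k ≠ i := by
    rintro rfl
    rw [← NeWord.inv_prod, NeWord.equiv_prod, NeWord.fstIdx_toWord] at hlast
    exact hlast rfl
  let W := NeWord.append w.inv hj (NeWord.append (NeWord.singleton a ha) hj.symm w)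
  have hW : W.prod = (NeWord.singleton b (ne_one_of_of_eq_conj ha hb)).prod := by
    simp [W, hb, mul_assoc]
  have := congrArg Word.fstIdx (congrArg Word.equiv hW)
  rw [NeWord.equiv_prod, NeWord.equiv_prod, NeWord.fstIdx_toWord, NeWord.fstIdx_toWord] at this
  exact hk (Option.some_injective _ this)

end Word

theorem mem_range_of_conj_mem_range {i : ι} {a : G i} (ha : a ≠ 1) {g : CoprodI G}
    (hg : g⁻¹ * of a * g ∈ (of : G i →* CoprodI G).range) :
    g ∈ (of : G i →* CoprodI G).range := by
  classical
  induction hn : (Word.equiv g).toList.length using Nat.strong_induction_on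
    generalizing g a with
  | _ n ih =>
  have peel : ∀ {g : CoprodI G} {a : G i}, a ≠ 1 → g⁻¹ * of a * g ∈ (of : G i →* _).range →
      (Word.equiv g).toList.length = n → (Word.equiv g).fstIdx = some i →
      g ∈ (of : G i →* CoprodI G).range := by
    intro g a ha hg hn hfst
    obtain ⟨c, g₁, rfl, hlt⟩ := exists_eq_of_mul_of_length_lt hfst
    refine mul_mem ⟨c, rfl⟩ (ih _ (hn ▸ hlt) (a := c⁻¹ * a * c)
      (by rwa [Ne, mul_assoc, inv_mul_eq_one, right_eq_mul]) ?_ rfl)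
    simpa [mul_assoc] using hg
  by_cases h1 : g = 1
  · exact h1 ▸ one_mem _
  by_cases hfst : (Word.equiv g).fstIdx = some i
  · exact peel ha hg hn hfst
  by_cases hlast : (Word.equiv g⁻¹).fstIdx = some i
  · obtain ⟨b, hb⟩ := hg
    refine inv_mem_iff.mp (peel (ne_one_of_of_eq_conj ha hb) ⟨a, ?_⟩
      ((length_equiv_inv g).trans hn) hlast)
    rw [hb]
    group
  · exact absurd hg (conj_notMem_range_of_fstIdx_ne h1 hfst hlast ha)

theorem isMalnormal_range_of (i : ι) : IsMalnormal (of : G i →* CoprodI G).range := by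
  rintro g hg _ ⟨a, rfl⟩ hconj
  by_contra ha
  exact hg (mem_range_of_conj_mem_range (by rintro rfl; exact ha (map_one _)) hconj)

end Monoid.CoprodI

theorem IsMalnormal.comap {G K : Type*} [Group G] [Group K] {T : Subgroup K}
    (hT : IsMalnormal T) {f : G →* K} (hf : Function.Injective f) :
    IsMalnormal (T.comap f) := by
  intro g hg x hx hconj
  apply hf
  rw [map_one]
  exact hT (f g) hg (f x) hx (by simpa using hconj)

namespace Monoid.Coprod

open scoped Monoid.Coprod

universe u v

variable (M : Type u) (N : Type v) [Group M] [Group N]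

-- `CoprodI` needs a family in a single universe, hence the `ULift`s.
abbrev Summand : Bool → Type (max u v) := fun b => cond b (ULift.{v} M) (ULift.{u} N)

instance : ∀ b, Group (Summand M N b)
  | true => inferInstanceAs (Group (ULift M))
  | false => inferInstanceAs (Group (ULift N))

def toCoprodI : M ∗ N →* CoprodI (Summand M N) :=
  lift ((CoprodI.of (i := true)).comp MulEquiv.ulift.symm.toMonoidHom)
    ((CoprodI.of (i := false)).comp MulEquiv.ulift.symm.toMonoidHom)

def ofCoprodI : CoprodI (Summand M N) →* M ∗ N :=
  CoprodI.lift fun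
    | true => inl.comp MulEquiv.ulift.toMonoidHom
    | false => inr.comp MulEquiv.ulift.toMonoidHom

theorem ofCoprodI_of_true (m : ULift.{v} M) :
    ofCoprodI M N (CoprodI.of (i := true) m) = inl m.down := by
  rw [ofCoprodI, CoprodI.lift_of]
  rfl

theorem ofCoprodI_toCoprodI (x : M ∗ N) : ofCoprodI M N (toCoprodI M N x) = x := by
  have : (ofCoprodI M N).comp (toCoprodI M N) = .id (M ∗ N) := by
    ext <;> simp [toCoprodI, ofCoprodI]
  exact DFunLike.congr_fun this x

theorem toCoprodI_injective : Function.Injective (toCoprodI M N) :=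
  Function.LeftInverse.injective (ofCoprodI_toCoprodI M N)

theorem range_inl_eq_comap_toCoprodI :
    (inl : M →* M ∗ N).range = (CoprodI.of (i := true)).range.comap (toCoprodI M N) := by
  ext x
  constructor
  · rintro ⟨m, rfl⟩
    exact ⟨ULift.up m, rfl⟩
  · rintro ⟨m, hm⟩
    rw [← ofCoprodI_toCoprodI M N x, ← hm, ofCoprodI_of_true]
    exact ⟨m.down, rfl⟩

end Monoid.Coprod

theorem malnormal_free_product_factor (H H' : Type*) [Group H] [Group H'] :
    IsMalnormal ((Monoid.Coprod.inl : H →* Monoid.Coprod H H').range) := by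
  rw [Monoid.Coprod.range_inl_eq_comap_toCoprodI]
  exact (Monoid.CoprodI.isMalnormal_range_of true).comap (Monoid.Coprod.toCoprodI_injective H H')
end

section
/- Let G be a group containing a normal infinite cyclic subgroup C, and let H be a subgroup of G with at least 3 elements and H ≠ G. Then H is not malnormal in G. -/
theorem MulEquiv.eq_self_or_eq_inv_of_mulEquiv_int {A : Type*} [Group A]
    (e : A ≃* Multiplicative ℤ) (φ : A ≃* A) : (∀ a, φ a = a) ∨ ∀ a, φ a = a⁻¹ := by
  set ψ := MulEquiv.toAdditive (e.symm.trans (φ.trans e))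
  have hψ (a : A) : ψ (Additive.ofMul (e a)) = Additive.ofMul (e (φ a)) := by simp [ψ]
  rcases Int.addEquiv_eq_refl_or_neg ψ with h | h
  · left
    intro a
    apply e.injective
    exact Additive.ofMul.injective ((hψ a).symm.trans (by rw [h]; rfl))
  · right
    intro a
    apply e.injective
    rw [map_inv]
    exact Additive.ofMul.injective ((hψ a).symm.trans (by rw [h]; rfl))

namespace Subgroup

variable {G : Type*} [Group G] {C : Subgroup G}

theorem mem_centralizer_or_conj_eq_inv [C.Normal] (e : C ≃* Multiplicative ℤ) (g : G) :
    g ∈ centralizer (C : Set G) ∨ ∀ c ∈ C, g * c * g⁻¹ = c⁻¹ := by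
  rcases MulEquiv.eq_self_or_eq_inv_of_mulEquiv_int e (MulAut.conjNormal g) with h | h
  · left
    rw [mem_centralizer_iff]
    intro c hc
    have hgc : g * c * g⁻¹ = c := by simpa using congrArg Subtype.val (h ⟨c, hc⟩)
    exact (mul_inv_eq_iff_eq_mul.mp hgc).symm
  · right
    intro c hc
    simpa using congrArg Subtype.val (h ⟨c, hc⟩)

theorem mul_mem_centralizer_of_notMem [C.Normal] (e : C ≃* Multiplicative ℤ) {g h : G}
    (hg : g ∉ centralizer (C : Set G)) (hh : h ∉ centralizer (C : Set G)) :
    g * h ∈ centralizer (C : Set G) := by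
  have hg' := (mem_centralizer_or_conj_eq_inv e g).resolve_left hg
  have hh' := (mem_centralizer_or_conj_eq_inv e h).resolve_left hh
  rw [mem_centralizer_iff]
  intro c hc
  have hghc : g * h * c * (g * h)⁻¹ = c := by
    calc g * h * c * (g * h)⁻¹ = g * (h * c * h⁻¹) * g⁻¹ := by group
      _ = (g * c * g⁻¹)⁻¹ := by rw [hh' c hc]; group
      _ = c := by rw [hg' c hc, inv_inv]
  exact (mul_inv_eq_iff_eq_mul.mp hghc).symm

end Subgroup

theorem Subgroup.exists_ne_one_mem_inf_of_mul_mem {G : Type*} [Group G] {H K : Subgroup G}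
    (hK : ∀ g h, g ∉ K → h ∉ K → g * h ∈ K)
    (hH : ∃ a b c : G, a ∈ H ∧ b ∈ H ∧ c ∈ H ∧ a ≠ b ∧ a ≠ c ∧ b ≠ c) :
    ∃ x ∈ H ⊓ K, x ≠ 1 := by
  obtain ⟨a, b, c, ha, hb, hc, hab, hac, hbc⟩ := hH
  have mem (x y : G) (hx : x ∈ H) (hy : y ∈ H) : x⁻¹ * y ∈ H := H.mul_mem (H.inv_mem hx) hy
  have ne (x y : G) (hxy : x ≠ y) : x⁻¹ * y ≠ 1 := fun h => hxy (inv_mul_eq_one.mp h)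
  by_cases hu : a⁻¹ * b ∈ K
  · exact ⟨a⁻¹ * b, ⟨mem a b ha hb, hu⟩, ne a b hab⟩
  by_cases hv : a⁻¹ * c ∈ K
  · exact ⟨a⁻¹ * c, ⟨mem a c ha hc, hv⟩, ne a c hac⟩
  have hw : (a⁻¹ * b)⁻¹ * (a⁻¹ * c) = b⁻¹ * c := by group
  refine ⟨b⁻¹ * c, ⟨mem b c hb hc, ?_⟩, ne b c hbc⟩
  rw [← hw]
  exact hK _ _ (fun h => hu (by simpa using K.inv_mem h)) hv

namespace IsMalnormal

variable {G : Type*} [Group G] {H : Subgroup G}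

theorem eq_one_of_commute (hH : IsMalnormal H) {c x : G} (hc : c ∉ H) (hx : x ∈ H)
    (hcx : Commute c x) : x = 1 :=
  hH c hc x hx (by rwa [mul_assoc, ← hcx.eq, inv_mul_cancel_left])

theorem eq_top_of_le {N : Subgroup G} [N.Normal] (hH : IsMalnormal H) (hN : N ≠ ⊥)
    (hNH : N ≤ H) : H = ⊤ := by
  obtain ⟨c, hc, hc1⟩ := N.bot_or_exists_ne_one.resolve_left hN
  rw [Subgroup.eq_top_iff']
  by_contra! hg
  obtain ⟨g, hg⟩ := hg
  exact hc1 (hH g hg c (hNH hc) (hNH (‹N.Normal›.conj_mem' c hc g)))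

end IsMalnormal

theorem not_malnormal_of_normal_infinite_cyclic {G : Type*} [Group G]
    (C H : Subgroup G) [C.Normal] (hC : Nonempty (C ≃* Multiplicative ℤ))
    (hcard : ∃ a b c : G, a ∈ H ∧ b ∈ H ∧ c ∈ H ∧ a ≠ b ∧ a ≠ c ∧ b ≠ c)
    (hne : H ≠ ⊤) :
    ¬ IsMalnormal H := by
  intro hmal
  obtain ⟨e⟩ := hC
  have hC_ne_bot : C ≠ ⊥ := (Subgroup.nontrivial_iff_ne_bot C).mp e.toEquiv.nontrivial
  obtain ⟨c, hcC, hcH⟩ : ∃ c ∈ C, c ∉ H :=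
    Set.not_subset.mp fun hCH => hne (hmal.eq_top_of_le hC_ne_bot hCH)
  obtain ⟨x, ⟨hxH, hxZ⟩, hx1⟩ := Subgroup.exists_ne_one_mem_inf_of_mul_mem
    (fun _ _ => Subgroup.mul_mem_centralizer_of_notMem e) hcard
  exact hx1 (hmal.eq_one_of_commute hcH hxH (Subgroup.mem_centralizer_iff.mp hxZ c hcC))
end

section
/- Every subgroup H of a group G is contained in a smallest malnormal subgroup of G (the malnormal hull of H), namely the intersection of all malnormal subgroups of G containing H. -/
theorem malnormal_hull_exists {G : Type*} [Group G] (H : Subgroup G) :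
    ∃ K : Subgroup G, K = sInf {L : Subgroup G | IsMalnormal L ∧ H ≤ L} ∧
      IsMalnormal K ∧ H ≤ K ∧
      ∀ L : Subgroup G, IsMalnormal L → H ≤ L → K ≤ L := by
  refine ⟨sInf {L : Subgroup G | IsMalnormal L ∧ H ≤ L}, rfl, ?_, ?_, ?_⟩
  · intro g hg x hx hgx
    rw [Subgroup.mem_sInf] at hg
    push_neg at hg
    obtain ⟨L, hL, hgL⟩ := hg
    exact hL.1 g hgL x (Subgroup.mem_sInf.1 hx L hL) (Subgroup.mem_sInf.1 hgx L hL)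
  · exact le_sInf fun L hL => hL.2
  · intro L hL1 hL2
    exact sInf_le ⟨hL1, hL2⟩
end

section
/- Let G = N ⋊ H be a semidirect product. If C_G(n) ⊆ N for every n ∈ N with n ≠ e (i.e., C_G(n) = C_N(n)), then H is malnormal in G. -/
theorem malnormal_of_centralizer_cond {G : Type*} [Group G] (N H : Subgroup G)
    [N.Normal] (hdisj : N ⊓ H = ⊥)
    (hsplit : ∀ g : G, ∃ n ∈ N, ∃ h ∈ H, g = n * h)
    (hcent : ∀ n : G, n ∈ N → n ≠ 1 → Subgroup.centralizer {n} ≤ N) :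
    IsMalnormal H := by
  intro g hg x hx hconj
  obtain ⟨n, hn, h, hh, rfl⟩ := hsplit g
  have hn1 : n ≠ 1 := by
    rintro rfl
    exact hg (by simpa using hh)
  have h1 : n⁻¹ * x * n ∈ H := by
    have h2 : h * ((n * h)⁻¹ * x * (n * h)) * h⁻¹ ∈ H :=
      H.mul_mem (H.mul_mem hh hconj) (H.inv_mem hh)
    have : h * ((n * h)⁻¹ * x * (n * h)) * h⁻¹ = n⁻¹ * x * n := by group
    rwa [this] at h2
  have hcomm : x⁻¹ * (n⁻¹ * x * n) ∈ N ⊓ H := by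
    constructor
    · have h4 : x⁻¹ * n⁻¹ * x⁻¹⁻¹ ∈ N :=
        Subgroup.Normal.conj_mem ‹N.Normal› n⁻¹ (N.inv_mem hn) x⁻¹
      rw [inv_inv] at h4
      have := N.mul_mem h4 hn
      simpa [mul_assoc] using this
    · exact H.mul_mem (H.inv_mem hx) h1
  rw [hdisj, Subgroup.mem_bot] at hcomm
  have hxcent : x ∈ Subgroup.centralizer {n} := by
    rw [Subgroup.mem_centralizer_singleton_iff]
    have key : n⁻¹ * x * n = x := by
      calc n⁻¹ * x * n = x * (x⁻¹ * (n⁻¹ * x * n)) := by group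
        _ = x := by rw [hcomm]; group
    calc x * n = n * (n⁻¹ * x * n) := by group
      _ = n * x := by rw [key]
  have hxN : x ∈ N := hcent n hn hn1 hxcent
  have : x ∈ N ⊓ H := ⟨hxN, hx⟩
  rwa [hdisj, Subgroup.mem_bot] at this
end

section
/- Let H, K be nontrivial groups with h₁, h₂ ∈ H \ {e} satisfying h₁h₂ ≠ e, and k ∈ K \ {e}. In the free product G = H ∗ K, the elements h₁k and k⁻¹h₂ lie outside ⋃_{g∈G} gHg⁻¹, but their product h₁h₂ lies in H; hence the Frobenius kernel of the malnormal subgroup H in G is not a subgroup. -/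
/-! Projecting `H ∗ K` onto `K` kills `H`, hence every conjugate of `H`. Since `h₁k` and `k⁻¹h₂`
project to `k` and `k⁻¹`, no conjugate of either lies in `H`, while their product `h₁h₂` does. -/

namespace Monoid.Coprod

variable {M N : Type*} [Group M] [Group N]

theorem range_inl_le_ker_snd : (inl : M →* M ∗ N).range ≤ (snd : M ∗ N →* N).ker := by
  rintro _ ⟨m, rfl⟩
  exact snd_apply_inl m

theorem conj_notMem_range_inl_of_snd_ne_one {x : M ∗ N} (hx : snd x ≠ 1) (g : M ∗ N) :
    g⁻¹ * x * g ∉ (inl : M →* M ∗ N).range := fun hmem => hx <| by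
  simpa [mul_assoc, inv_mul_eq_one] using range_inl_le_ker_snd hmem

end Monoid.Coprod

open Monoid.Coprod in
theorem frobenius_kernel_not_subgroup_in_free_product_general
    {H K : Type*} [Group H] [Group K]
    (h₁ h₂ : H) (hprod : h₁ * h₂ ≠ 1)
    (k : K) (hk : k ≠ 1) :
    (∀ g : Monoid.Coprod H K,
        g⁻¹ * (inl h₁ * inr k) * g ∉ (inl : H →* Monoid.Coprod H K).range) ∧
    (∀ g : Monoid.Coprod H K,
        g⁻¹ * (inr k⁻¹ * inl h₂) * g ∉ (inl : H →* Monoid.Coprod H K).range) ∧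
    (inl h₁ * inr k) * (inr k⁻¹ * inl h₂) = (inl (h₁ * h₂) : Monoid.Coprod H K) ∧
    (inl (h₁ * h₂) : Monoid.Coprod H K) ∈ (inl : H →* Monoid.Coprod H K).range ∧
    (inl (h₁ * h₂) : Monoid.Coprod H K) ≠ 1 := by
  refine ⟨conj_notMem_range_inl_of_snd_ne_one (by simpa using hk),
    conj_notMem_range_inl_of_snd_ne_one (by simpa using hk), ?_, ⟨h₁ * h₂, rfl⟩,
    (map_ne_one_iff _ inl_injective).2 hprod⟩
  simp [mul_assoc, ← map_mul]

open Monoid.Coprod in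
theorem frobenius_kernel_not_subgroup_in_free_product
    {H K : Type*} [Group H] [Group K]
    (h₁ h₂ : H) (hh₁ : h₁ ≠ 1) (hh₂ : h₂ ≠ 1) (hprod : h₁ * h₂ ≠ 1)
    (k : K) (hk : k ≠ 1) :
    (∀ g : Monoid.Coprod H K,
        g⁻¹ * (inl h₁ * inr k) * g ∉ (inl : H →* Monoid.Coprod H K).range) ∧
    (∀ g : Monoid.Coprod H K,
        g⁻¹ * (inr k⁻¹ * inl h₂) * g ∉ (inl : H →* Monoid.Coprod H K).range) ∧
    (inl h₁ * inr k) * (inr k⁻¹ * inl h₂) = (inl (h₁ * h₂) : Monoid.Coprod H K) ∧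
    (inl (h₁ * h₂) : Monoid.Coprod H K) ∈ (inl : H →* Monoid.Coprod H K).range ∧
    (inl (h₁ * h₂) : Monoid.Coprod H K) ≠ 1 :=
  frobenius_kernel_not_subgroup_in_free_product_general h₁ h₂ hprod k hk
end
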